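/- arXiv:1205.1255 — 2 statements merged into one kernel-verified Lean document; each statement's English description precedes it below -/
import Mathlib

section
/- Let α > 3 be real, let σ₁ satisfy α = (18σ₁ − 5σ₁²)/(3(3σ₁² + 14σ₁ − 18)) with σ₂ < σ₁ < 9/8, set q₁ = 6ασ₁/(3α + σ₁) and β = 2σ₁/(9 − 8σ₁). Then 3/(2α) + 2/β = f(α), where f(α) = (√(103α² − 12α + 9) − 9α)/(2α). -/
/-!
Under the relation between `α` and `σ₁`, the quantity `103 α² - 12 α + 9` is the perfect square
of `3 + α (18 - 7 σ₁) / σ₁`, and this root is positive on the branch `σ₁ > (√103 - 7) / 3`.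
Since `2 / β = (9 - 8 σ₁) / σ₁`, the claimed identity is then a rational identity in `α` and `σ₁`.
-/

namespace ExponentRelation

lemma pos_of_sqrt_103_lt {σ : ℝ} (h : (√103 - 7) / 3 < σ) : 0 < σ := by
  have : (7 : ℝ) < √103 := by
    rw [Real.lt_sqrt (by norm_num)]
    norm_num
  linarith

lemma quadratic_pos_of_sqrt_103_lt {σ : ℝ} (h : (√103 - 7) / 3 < σ) :
    0 < 3 * σ ^ 2 + 14 * σ - 18 := by
  have hroot : √103 < 3 * σ + 7 := by linarith
  have hsq : (103 : ℝ) < (3 * σ + 7) ^ 2 :=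
    (Real.sqrt_lt' (by linarith [Real.sqrt_nonneg 103])).1 hroot
  nlinarith

variable {α σ : ℝ}

lemma sq_eq_of_rel (hσ : σ ≠ 0)
    (hrel : α * (3 * (3 * σ ^ 2 + 14 * σ - 18)) = 18 * σ - 5 * σ ^ 2) :
    (3 + α * (18 - 7 * σ) / σ) ^ 2 = 103 * α ^ 2 - 12 * α + 9 := by
  field_simp
  linear_combination (-6 * α) * hrel

lemma nonneg_of_rel (hσ : 0 < σ) (hd : 0 < 3 * σ ^ 2 + 14 * σ - 18)
    (hrel : α * (3 * (3 * σ ^ 2 + 14 * σ - 18)) = 18 * σ - 5 * σ ^ 2) :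
    0 ≤ 3 + α * (18 - 7 * σ) / σ := by
  have hcleared : (3 * σ + α * (18 - 7 * σ)) * (3 * (3 * σ ^ 2 + 14 * σ - 18))
      = σ * (62 * σ ^ 2 - 90 * σ + 162) := by
    linear_combination (18 - 7 * σ) * hrel
  have hquad : 0 < 62 * σ ^ 2 - 90 * σ + 162 := by nlinarith [sq_nonneg (σ - 1)]
  have hnum : 0 < 3 * σ + α * (18 - 7 * σ) :=
    pos_of_mul_pos_left (hcleared ▸ mul_pos hσ hquad) (by positivity)
  rw [show 3 + α * (18 - 7 * σ) / σ = (3 * σ + α * (18 - 7 * σ)) / σ by field_simp]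
  positivity

lemma sqrt_eq_of_rel (hσ : 0 < σ) (hd : 0 < 3 * σ ^ 2 + 14 * σ - 18)
    (hrel : α * (3 * (3 * σ ^ 2 + 14 * σ - 18)) = 18 * σ - 5 * σ ^ 2) :
    √(103 * α ^ 2 - 12 * α + 9) = 3 + α * (18 - 7 * σ) / σ := by
  rw [← sq_eq_of_rel hσ.ne' hrel, Real.sqrt_sq (nonneg_of_rel hσ hd hrel)]

end ExponentRelation

open ExponentRelation in
theorem stmt_11_general (α σ₁ β : ℝ) (hα : 3 < α)
    (hrel : α = (18 * σ₁ - 5 * σ₁ ^ 2) / (3 * (3 * σ₁ ^ 2 + 14 * σ₁ - 18)))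
    (hσ₁lo : (Real.sqrt 103 - 7) / 3 < σ₁)
    (hβ : β = 2 * σ₁ / (9 - 8 * σ₁)) :
    3 / (2 * α) + 2 / β = (Real.sqrt (103 * α ^ 2 - 12 * α + 9) - 9 * α) / (2 * α) := by
  have hσ₁ := pos_of_sqrt_103_lt hσ₁lo
  have hd := quadratic_pos_of_sqrt_103_lt hσ₁lo
  have hrel' : α * (3 * (3 * σ₁ ^ 2 + 14 * σ₁ - 18)) = 18 * σ₁ - 5 * σ₁ ^ 2 :=
    (eq_div_iff (by positivity)).1 hrel
  have hα₀ : α ≠ 0 := by positivity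
  rw [sqrt_eq_of_rel hσ₁ hd hrel', hβ, div_div_eq_mul_div]
  field_simp
  ring

theorem stmt_11 (α σ₁ q₁ β : ℝ) (hα : 3 < α)
    (hrel : α = (18 * σ₁ - 5 * σ₁ ^ 2) / (3 * (3 * σ₁ ^ 2 + 14 * σ₁ - 18)))
    (hσ₁lo : (Real.sqrt 103 - 7) / 3 < σ₁) (hσ₁hi : σ₁ < 9 / 8)
    (hq₁ : q₁ = 6 * α * σ₁ / (3 * α + σ₁))
    (hβ : β = 2 * σ₁ / (9 - 8 * σ₁)) :
    3 / (2 * α) + 2 / β = (Real.sqrt (103 * α ^ 2 - 12 * α + 9) - 9 * α) / (2 * α) :=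
  stmt_11_general α σ₁ β hα hrel hσ₁lo hβ
end

section
/- Let α > 9/5 be real, let μ satisfy α = (12μ + 5μ²)/(6μ² + μ − 12) with 4/3 < μ < 3, and set β = 2μ/(3 − μ). Then 3/(2α) + 2/β = g(α), where g(α) = (√(289α² − 264α + 144) − 7α)/(8α). -/
/-!
Since `2 / β = (3 - μ) / μ`, the claim amounts to `√(289α² - 264α + 144) = 12 + α (24 / μ - 1)`.
On the curve `α (6μ² + μ - 12) = 12μ + 5μ²` the discriminant is a perfect square:
`μ² (289α² - 264α + 144) - (12μ + α (24 - μ))² = 48α (α (6μ² + μ - 12) - 12μ - 5μ²)`.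
The root is `(67μ² + 120μ + 144) / (6μ² + μ - 12)` there, which is positive once `μ > 4/3`.
-/

namespace Real

lemma six_mul_sq_add_sub_twelve_pos {μ : ℝ} (hμ : 4 / 3 < μ) : 0 < 6 * μ ^ 2 + μ - 12 := by
  nlinarith

lemma two_div_two_mul_div (μ : ℝ) : 2 / (2 * μ / (3 - μ)) = (3 - μ) / μ := by
  rw [div_div_eq_mul_div, mul_div_mul_left _ _ two_ne_zero]

section Curve

variable {α μ : ℝ} (hμ : μ ≠ 0) (hcurve : α * (6 * μ ^ 2 + μ - 12) = 12 * μ + 5 * μ ^ 2)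
include hμ hcurve

lemma discriminant_eq_sq_of_curve :
    289 * α ^ 2 - 264 * α + 144 = (12 + α * (24 / μ - 1)) ^ 2 := by
  field_simp
  linear_combination 48 * α * hcurve

lemma twelve_add_mul_eq_of_curve (hD : 6 * μ ^ 2 + μ - 12 ≠ 0) :
    12 + α * (24 / μ - 1) = (67 * μ ^ 2 + 120 * μ + 144) / (6 * μ ^ 2 + μ - 12) := by
  rw [eq_div_iff hD]
  field_simp
  linear_combination (24 - μ) * hcurve

end Curve

lemma sqrt_discriminant_of_curve {α μ : ℝ} (hμ : 4 / 3 < μ)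
    (hcurve : α * (6 * μ ^ 2 + μ - 12) = 12 * μ + 5 * μ ^ 2) :
    √(289 * α ^ 2 - 264 * α + 144) = 12 + α * (24 / μ - 1) := by
  have hD := six_mul_sq_add_sub_twelve_pos hμ
  have hμ0 : μ ≠ 0 := by positivity
  rw [discriminant_eq_sq_of_curve hμ0 hcurve, sqrt_sq]
  rw [twelve_add_mul_eq_of_curve hμ0 hcurve hD.ne']
  positivity

end Real

theorem stmt_12_general (α μ β : ℝ)
    (hrel : α = (12 * μ + 5 * μ ^ 2) / (6 * μ ^ 2 + μ - 12))
    (hμlo : 4 / 3 < μ)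
    (hβ : β = 2 * μ / (3 - μ)) :
    3 / (2 * α) + 2 / β = (Real.sqrt (289 * α ^ 2 - 264 * α + 144) - 7 * α) / (8 * α) := by
  have hD := Real.six_mul_sq_add_sub_twelve_pos hμlo
  have hcurve : α * (6 * μ ^ 2 + μ - 12) = 12 * μ + 5 * μ ^ 2 := by
    rw [hrel, div_mul_cancel₀ _ hD.ne']
  have hμ : μ ≠ 0 := by positivity
  have hα : α ≠ 0 := by
    rw [hrel]
    positivity
  rw [Real.sqrt_discriminant_of_curve hμlo hcurve, hβ, Real.two_div_two_mul_div]
  field_simp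
  ring

theorem stmt_12 (α μ β : ℝ) (hα : 9 / 5 < α)
    (hrel : α = (12 * μ + 5 * μ ^ 2) / (6 * μ ^ 2 + μ - 12))
    (hμlo : 4 / 3 < μ) (hμhi : μ < 3)
    (hβ : β = 2 * μ / (3 - μ)) :
    3 / (2 * α) + 2 / β = (Real.sqrt (289 * α ^ 2 - 264 * α + 144) - 7 * α) / (8 * α) :=
  stmt_12_general α μ β hrel hμlo hβ
end
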